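/- Let c : ℕ → ℚ satisfy the Catalan kernel recurrence, and let s : ℕ → ℚ be its partial-sum sequence. Then for every natural number n: −(n+2)(n+3)·s_n + (n+3)(5n+14)·s_{n+1} − (8n² + 52n + 85)·s_{n+2} + (2n+7)²·s_{n+3} = 0. -/

import Mathlib

/-!
The order-3 operator has coefficients summing to zero, so applied to `s` it only sees the
differences `s (m + 1) - s m = c (m + 1)`; the resulting order-2 operator on `c` is exactly the
Catalan kernel recurrence shifted by one.
-/

def catalanKernel (c : ℕ → ℚ) (n : ℕ) : ℚ :=
  ((n : ℚ) + 1) * ((n : ℚ) + 2) * c n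
    - 4 * ((n : ℚ) + 2) ^ 2 * c (n + 1)
    + (2 * (n : ℚ) + 5) ^ 2 * c (n + 2)

def catalanOrder3 (s : ℕ → ℚ) (n : ℕ) : ℚ :=
  -((n : ℚ) + 2) * ((n : ℚ) + 3) * s n
    + ((n : ℚ) + 3) * (5 * (n : ℚ) + 14) * s (n + 1)
    - (8 * (n : ℚ) ^ 2 + 52 * n + 85) * s (n + 2)
    + (2 * (n : ℚ) + 7) ^ 2 * s (n + 3)

theorem partialSum_succ {M : Type*} [AddCommMonoid M] {c s : ℕ → M}
    (hs : ∀ n, s n = ∑ k ∈ Finset.range (n + 1), c k) (n : ℕ) :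
    s (n + 1) = s n + c (n + 1) := by
  rw [hs, hs, Finset.sum_range_succ]

theorem catalanOrder3_eq_catalanKernel_succ {c s : ℕ → ℚ}
    (hsucc : ∀ m, s (m + 1) = s m + c (m + 1)) (n : ℕ) :
    catalanOrder3 s n = catalanKernel c (n + 1) := by
  have e1 := hsucc n
  have e2 := hsucc (n + 1)
  have e3 := hsucc (n + 2)
  simp only [catalanOrder3, catalanKernel]
  push_cast
  linear_combination ((n : ℚ) + 2) * ((n : ℚ) + 3) * e1
    - 4 * ((n : ℚ) + 3) ^ 2 * e2 + (2 * (n : ℚ) + 7) ^ 2 * e3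

/-- If `c` satisfies the Catalan kernel recurrence and `s` is its partial-sum sequence,
then `s` satisfies (4 times) the printed order-3 recurrence for Catalan's constant. -/
theorem catalan_order3_from_kernel (c s : ℕ → ℚ)
    (hc : ∀ n : ℕ, ((n : ℚ) + 1) * ((n : ℚ) + 2) * c n
        - 4 * ((n : ℚ) + 2) ^ 2 * c (n + 1)
        + (2 * (n : ℚ) + 5) ^ 2 * c (n + 2) = 0)
    (hs : ∀ n : ℕ, s n = ∑ k ∈ Finset.range (n + 1), c k) :
    ∀ n : ℕ,
      -((n : ℚ) + 2) * ((n : ℚ) + 3) * s n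
      + ((n : ℚ) + 3) * (5 * (n : ℚ) + 14) * s (n + 1)
      - (8 * (n : ℚ) ^ 2 + 52 * n + 85) * s (n + 2)
      + (2 * (n : ℚ) + 7) ^ 2 * s (n + 3) = 0 := fun n =>
  (catalanOrder3_eq_catalanKernel_succ (partialSum_succ hs) n).trans (hc (n + 1))
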